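/- arXiv:2412.17254 — 3 statements merged into one kernel-verified Lean document; each statement's English description precedes it below -/
import Mathlib

section
/- Time-homogeneity is preserved (with degradation) under diagonal softmax reweighting: let $A^X$ be a row-stochastic matrix satisfying $|A^X_{i,(i+m)\bmod N} - A^X_{0,m}| \leq C N^{-\gamma}$ for all $i, m$. Define $A^Y_{i,j} = A^X_{i,j}\exp(-\alpha\mathbb{1}[i=j]) / \big(e^{-\alpha}A^X_{i,i} + \sum_{l\neq i} A^X_{i,l}\big)$. Then there exists a constant $C'$ (depending only on $C$) such that $|A^Y_{i,(i+m)\bmod N} - A^Y_{0,m}| \leq C' e^{2\alpha} N^{1-\gamma}$ for all $i$ and all $m \neq 0$, provided $N$ is large enough that the denominators are bounded below by $e^{-\alpha}/2$. -/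
/-!
Since every row of `A^X` sums to one, the reweighted denominator of row `i` is
`1 - (1 - e^{-α}) A^X_{i,i}`, so the denominators of rows `i` and `0` differ by at most
`|A^X_{i,i} - A^X_{0,0}| ≤ C N^{-γ}`, as do the numerators for `m ≠ 0`. Both denominators are at
least `e^{-α}/2` and at most one, so the two quotients differ by at most
`2 C N^{-γ} / (e^{-α}/2)^2 = 8 C e^{2α} N^{-γ} ≤ 8 C e^{2α} N^{1-γ}`.
-/

open BigOperators Finset

lemma le_one_of_nonneg_of_sum_eq_one {ι : Type*} [Fintype ι] {v : ι → ℝ}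
    (hv : ∀ j, 0 ≤ v j) (hsum : ∑ j, v j = 1) (j : ι) : v j ≤ 1 :=
  hsum ▸ single_le_sum (fun l _ => hv l) (mem_univ j)

section WeightedRowSum

variable {ι : Type*} [Fintype ι] [DecidableEq ι] {c : ℝ}

lemma mul_add_sum_filter_ne_eq {v : ι → ℝ} (hsum : ∑ j, v j = 1) (c : ℝ) (k : ι) :
    c * v k + ∑ l ∈ univ.filter (fun l => l ≠ k), v l = 1 - (1 - c) * v k := by
  rw [filter_ne', sum_erase_eq_sub (mem_univ k), hsum]
  ring

lemma mul_add_sum_filter_ne_le_one {v : ι → ℝ} (hv : ∀ j, 0 ≤ v j) (hsum : ∑ j, v j = 1)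
    (hc : c ≤ 1) (k : ι) : c * v k + ∑ l ∈ univ.filter (fun l => l ≠ k), v l ≤ 1 := by
  rw [mul_add_sum_filter_ne_eq hsum]
  nlinarith [hv k]

lemma abs_mul_add_sum_filter_ne_sub_le {u v : ι → ℝ} (hu : ∑ j, u j = 1) (hv : ∑ j, v j = 1)
    (hc₀ : 0 ≤ c) (hc₁ : c ≤ 1) (j k : ι) :
    |(c * u j + ∑ l ∈ univ.filter (fun l => l ≠ j), u l) -
      (c * v k + ∑ l ∈ univ.filter (fun l => l ≠ k), v l)| ≤ |u j - v k| := by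
  have hcoeff : |c - 1| ≤ 1 := abs_le.mpr ⟨by linarith, by linarith⟩
  calc _ = |c - 1| * |u j - v k| := by
        rw [mul_add_sum_filter_ne_eq hu, mul_add_sum_filter_ne_eq hv, ← abs_mul]; ring_nf
    _ ≤ 1 * |u j - v k| := by gcongr
    _ = |u j - v k| := one_mul _

end WeightedRowSum

lemma abs_div_sub_div_le_of_abs_sub_le {a b D D' d ε : ℝ} (hd : 0 < d) (hD : d ≤ D)
    (hD' : d ≤ D') (hD'₁ : D' ≤ 1) (hb : |b| ≤ 1) (hab : |a - b| ≤ ε) (hDD' : |D' - D| ≤ ε) :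
    |a / D - b / D'| ≤ 2 * ε / d ^ 2 := by
  have hDpos : 0 < D := hd.trans_le hD
  have hD'pos : 0 < D' := hd.trans_le hD'
  have hnum : |(a - b) * D' + b * (D' - D)| ≤ 2 * ε :=
    calc |(a - b) * D' + b * (D' - D)| ≤ |a - b| * |D'| + |b| * |D' - D| := by
          rw [← abs_mul, ← abs_mul]; exact abs_add_le _ _
      _ ≤ ε * 1 + 1 * ε := by
          rw [abs_of_pos hD'pos]
          gcongr
          exact (abs_nonneg _).trans hab
      _ = 2 * ε := by ring
  have hden : d ^ 2 ≤ D * D' := by rw [sq]; gcongr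
  calc |a / D - b / D'| = |(a - b) * D' + b * (D' - D)| / (D * D') := by
        rw [div_sub_div _ _ hDpos.ne' hD'pos.ne', abs_div, abs_of_pos (mul_pos hDpos hD'pos)]
        ring_nf
    _ ≤ 2 * ε / d ^ 2 := div_le_div₀ (by linarith [abs_nonneg (a - b)]) hnum (by positivity) hden

lemma two_mul_div_exp_neg_div_two_sq (x α : ℝ) :
    2 * x / (Real.exp (-α) / 2) ^ 2 = 8 * x * Real.exp (2 * α) := by
  rw [div_pow, ← Real.exp_nat_mul, Nat.cast_ofNat, mul_neg, Real.exp_neg]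
  field_simp
  ring

theorem stmt7 (C : ℝ) (hC : 0 < C) :
    ∃ C' : ℝ, 0 < C' ∧
      ∀ (N : ℕ) [NeZero N] (α γ : ℝ), 0 ≤ α → 2 < γ →
        ∀ AX : ZMod N → ZMod N → ℝ,
          (∀ i j, 0 ≤ AX i j) → (∀ i, ∑ j : ZMod N, AX i j = 1) →
          (∀ i m : ZMod N, |AX i (i + m) - AX 0 m| ≤ C * (N : ℝ) ^ (-γ)) →
          (∀ i : ZMod N, Real.exp (-α) / 2 ≤
              Real.exp (-α) * AX i i + ∑ l ∈ Finset.univ.filter (fun l => l ≠ i), AX i l) →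
          ∀ i m : ZMod N, m ≠ 0 →
            |AX i (i + m) * Real.exp (-α * (if i = i + m then 1 else 0)) /
                (Real.exp (-α) * AX i i + ∑ l ∈ Finset.univ.filter (fun l => l ≠ i), AX i l) -
              AX 0 m * Real.exp (-α * (if (0 : ZMod N) = m then 1 else 0)) /
                (Real.exp (-α) * AX 0 0 +
                  ∑ l ∈ Finset.univ.filter (fun l => l ≠ (0 : ZMod N)), AX 0 l)|
              ≤ C' * Real.exp (2 * α) * (N : ℝ) ^ ((1 : ℝ) - γ) := by
  refine ⟨8 * C, by positivity, ?_⟩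
  intro N _ α γ hα _ AX hpos hsum hA hden i m hm
  have hoff : i ≠ i + m := fun h => hm (by simpa using h.symm)
  rw [if_neg hoff, if_neg (Ne.symm hm)]
  simp only [mul_zero, Real.exp_zero, mul_one]
  have hexp₀ : 0 ≤ Real.exp (-α) := (Real.exp_pos _).le
  have hexp₁ : Real.exp (-α) ≤ 1 := Real.exp_le_one_iff.mpr (by linarith)
  have hdenom_sub := abs_mul_add_sum_filter_ne_sub_le (hsum 0) (hsum i) hexp₀ hexp₁ 0 i
  have hdiag : |AX 0 0 - AX i i| ≤ C * (N : ℝ) ^ (-γ) := by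
    simpa [abs_sub_comm] using hA i 0
  have hentry : |AX 0 m| ≤ 1 := by
    rw [abs_of_nonneg (hpos 0 m)]
    exact le_one_of_nonneg_of_sum_eq_one (hpos 0) (hsum 0) m
  calc _ ≤ 2 * (C * (N : ℝ) ^ (-γ)) / (Real.exp (-α) / 2) ^ 2 :=
        abs_div_sub_div_le_of_abs_sub_le (by positivity) (hden i) (hden 0)
          (mul_add_sum_filter_ne_le_one (hpos 0) (hsum 0) hexp₁ 0) hentry (hA i m)
          (hdenom_sub.trans hdiag)
    _ = 8 * C * Real.exp (2 * α) * (N : ℝ) ^ (-γ) := by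
        rw [two_mul_div_exp_neg_div_two_sq]; ring
    _ ≤ 8 * C * Real.exp (2 * α) * (N : ℝ) ^ ((1 : ℝ) - γ) := by
        gcongr
        · exact_mod_cast Nat.one_le_iff_ne_zero.mpr (NeZero.ne N)
        · linarith
end

section
/- Main consistency reduction theorem (simplified version): Let $A^X$ be a row-stochastic attention matrix with minimal diagonal entry $a = \min_i A^X_{i,i}$, suppose $A^X$ is exactly time-homogeneous ($A^X_{i,(i+m)\bmod N} = A^X_{0,m}$ for all $i,m$), let $v \in \mathbb{R}^N$, $x = A^X v$, and let $x^{dyn} = A^{X,dyn} v$ where $A^{X,dyn}$ zeroes out the diagonal of $A^X$. Assume the separation condition: $|\mathrm{DSTFT}(x^{dyn},\psi,\tau,k)| \leq \kappa|\mathrm{DSTFT}(x,\psi,\tau,k)|$ for all $\tau$ and all $k$ with $k_t \leq k \leq \lfloor N/2\rfloor$, for some $\kappa < 1-a$. Then for any $\eta \in (\kappa/(1-a), 1)$, setting $\alpha = \log\frac{1-\kappa-a\eta}{\eta(1-a)-\kappa}$ and $y = \mathrm{softmax\text{-}rows}(\log\text{-scores of } A^X - \alpha I)\, v$, the inconsistency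 errors $E(z,\tau) := \sum_{k=k_t}^{\lfloor N/2\rfloor}|\mathrm{DSTFT}(z,\psi,\tau,k)|$ satisfy $E(y,\tau) \leq \eta\, E(x,\tau)$ for all $\tau$. -/
open Complex BigOperators Finset

noncomputable def dft {N : ℕ} [NeZero N] (x : ZMod N → ℂ) (k : ZMod N) : ℂ :=
  ∑ n : ZMod N, x n * Complex.exp (-2 * Real.pi * Complex.I * ((k.val : ℂ) * (n.val : ℂ)) / (N : ℂ))

noncomputable def dstft {N : ℕ} [NeZero N] (x : ZMod N → ℂ) (ψ : ZMod N → ℝ) (m k : ZMod N) : ℂ :=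
  ∑ n : ZMod N, x n * (ψ (n - m) : ℂ) *
    Complex.exp (-2 * Real.pi * Complex.I * ((k.val : ℂ) * (n.val : ℂ)) / (N : ℂ))

/-!
Lowering the self-score by `α` multiplies the diagonal attention weight by `c = exp (-α)` and
renormalises each row by `d = 1 - (1 - c) a`. Under homogeneity the diagonal weight is the constant
`a`, so `y = (c • x + (1 - c) • x_dyn) / d`, and by linearity of the DSTFT and the separation
condition every coefficient of `y` is at most `(c + (1 - c) κ) / d` times that of `x`.
The choice of `α` makes this ratio exactly `η`.
-/

lemma dstft_smul_add_smul {N : ℕ} [NeZero N] (x w : ZMod N → ℂ) (ψ : ZMod N → ℝ) (m k : ZMod N)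
    (p q : ℝ) :
    dstft (p • x + q • w) ψ m k = p • dstft x ψ m k + q • dstft w ψ m k := by
  simp only [dstft, Finset.smul_sum, ← Finset.sum_add_distrib, Pi.add_apply, Pi.smul_apply,
    add_mul, smul_mul_assoc]

lemma norm_smul_add_smul_le {E : Type*} [SeminormedAddCommGroup E] [NormedSpace ℝ E]
    {x y : E} {p q κ : ℝ} (hp : 0 ≤ p) (hq : 0 ≤ q) (hy : ‖y‖ ≤ κ * ‖x‖) :
    ‖p • x + q • y‖ ≤ (p + q * κ) * ‖x‖ :=
  calc ‖p • x + q • y‖ ≤ p * ‖x‖ + q * ‖y‖ := by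
        refine (norm_add_le _ _).trans_eq ?_
        rw [norm_smul_of_nonneg hp, norm_smul_of_nonneg hq]
    _ ≤ p * ‖x‖ + q * (κ * ‖x‖) := by gcongr
    _ = (p + q * κ) * ‖x‖ := by ring

section Softmax

variable {ι : Type*} [Fintype ι] [DecidableEq ι]

lemma exp_sub_ite_div_sum_exp_sub_ite [Nonempty ι] (s : ι → ℝ) (i j : ι) (α : ℝ) :
    Real.exp (s j - if i = j then α else 0) / ∑ l, Real.exp (s l - if i = l then α else 0) =
      Real.exp (s j) / (∑ l, Real.exp (s l)) * (if i = j then Real.exp (-α) else 1) /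
        (1 - (1 - Real.exp (-α)) * (Real.exp (s i) / ∑ l, Real.exp (s l))) := by
  have hexp : ∀ l, Real.exp (s l - if i = l then α else 0) =
      Real.exp (s l) * (if i = l then Real.exp (-α) else 1) := by
    intro l
    split_ifs <;> simp [sub_eq_add_neg, Real.exp_add]
  have hZ : 0 < ∑ l, Real.exp (s l) := Finset.sum_pos (fun l _ => Real.exp_pos _) univ_nonempty
  have hshifted : ∑ l, Real.exp (s l - if i = l then α else 0) =
      ∑ l, Real.exp (s l) - (1 - Real.exp (-α)) * Real.exp (s i) := by
    have hterm : ∀ l, Real.exp (s l - if i = l then α else 0) =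
        Real.exp (s l) - if i = l then (1 - Real.exp (-α)) * Real.exp (s i) else 0 := by
      intro l
      rw [hexp]
      split_ifs with h
      · subst h; ring
      · ring
    simp only [hterm, Finset.sum_sub_distrib, Finset.sum_ite_eq, if_pos (mem_univ i)]
  rw [hexp, hshifted]
  field_simp

lemma sum_mul_ite_div_mul (p v : ι → ℝ) (i : ι) (c d : ℝ) :
    ∑ j, p j * (if i = j then c else 1) / d * v j =
      c / d * ∑ j, p j * v j + (1 - c) / d * ∑ j ∈ univ.filter (fun j => j ≠ i), p j * v j := by
  have hrest : ∑ j ∈ univ.erase i, p j * (if i = j then c else 1) / d * v j =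
      (∑ j ∈ univ.erase i, p j * v j) / d := by
    rw [Finset.sum_div]
    refine Finset.sum_congr rfl fun j hj => ?_
    rw [if_neg (Finset.ne_of_mem_erase hj).symm]
    ring
  rw [filter_ne', ← Finset.add_sum_erase _ _ (mem_univ i), ← Finset.add_sum_erase _ _ (mem_univ i),
    hrest, if_pos rfl]
  ring

end Softmax

lemma exp_neg_log_reweighting {a κ η α : ℝ} (hκ : 0 ≤ κ) (hκa : κ < 1 - a)
    (hη1 : κ / (1 - a) < η) (hη2 : η < 1)
    (hα : α = Real.log ((1 - κ - a * η) / (η * (1 - a) - κ))) :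
    Real.exp (-α) ≤ 1 ∧ 0 < 1 - (1 - Real.exp (-α)) * a ∧
      Real.exp (-α) + (1 - Real.exp (-α)) * κ = η * (1 - (1 - Real.exp (-α)) * a) := by
  have hden : 0 < η * (1 - a) - κ := by
    have := (div_lt_iff₀ (hκ.trans_lt hκa)).mp hη1
    linarith
  have hnum : 0 < 1 - κ - a * η := by nlinarith
  have hc : Real.exp (-α) = (η * (1 - a) - κ) / (1 - κ - a * η) := by
    rw [hα, Real.exp_neg, Real.exp_log (div_pos hnum hden), inv_div]
  have hkey : Real.exp (-α) * (1 - κ - a * η) = η * (1 - a) - κ := by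
    rw [hc, div_mul_cancel₀ _ hnum.ne']
  have hc1 : Real.exp (-α) ≤ 1 := by
    rw [hc, div_le_one hnum]
    nlinarith
  refine ⟨hc1, ?_, by linear_combination hkey⟩
  nlinarith

theorem stmt15_general (N : ℕ) [NeZero N] (S : ZMod N → ZMod N → ℝ)
    (AX AY : ZMod N → ZMod N → ℝ) (v : ZMod N → ℝ) (ψ : ZMod N → ℝ)
    (a κ η α : ℝ) (kt : ℕ)
    (hAX : ∀ i j, AX i j = Real.exp (S i j) / ∑ l : ZMod N, Real.exp (S i l))
    (hAY : ∀ i j, AY i j = Real.exp (S i j - if i = j then α else 0) /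
        ∑ l : ZMod N, Real.exp (S i l - if i = l then α else 0))
    (hhom : ∀ i m : ZMod N, AX i (i + m) = AX 0 m)
    (ha : IsLeast (Set.range fun i : ZMod N => AX i i) a)
    (hκ : 0 ≤ κ) (hκa : κ < 1 - a)
    (hsep : ∀ τ : ZMod N, ∀ k : ℕ, kt ≤ k → k ≤ N / 2 →
      ‖dstft
          (fun n => ((∑ j ∈ Finset.univ.filter (fun j => j ≠ n), AX n j * v j : ℝ) : ℂ))
          ψ τ (k : ZMod N)‖ ≤
        κ * ‖dstft (fun n => ((∑ j : ZMod N, AX n j * v j : ℝ) : ℂ))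
          ψ τ (k : ZMod N)‖)
    (hη1 : κ / (1 - a) < η) (hη2 : η < 1)
    (hα : α = Real.log ((1 - κ - a * η) / (η * (1 - a) - κ))) :
    ∀ τ : ZMod N,
      ∑ k ∈ Finset.Icc kt (N / 2),
          ‖dstft (fun n => ((∑ j : ZMod N, AY n j * v j : ℝ) : ℂ))
            ψ τ (k : ZMod N)‖ ≤
        η * ∑ k ∈ Finset.Icc kt (N / 2),
          ‖dstft (fun n => ((∑ j : ZMod N, AX n j * v j : ℝ) : ℂ))
            ψ τ (k : ZMod N)‖ := by
  intro τ
  obtain ⟨i₀, hi₀⟩ := ha.1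
  have hdiag : ∀ n, AX n n = a := fun n => by
    simpa only [add_zero, hi₀] using (hhom n 0).trans (hhom i₀ 0).symm
  obtain ⟨hc1, hd, hη⟩ := exp_neg_log_reweighting hκ hκa hη1 hη2 hα
  set c := Real.exp (-α)
  set d := 1 - (1 - c) * a
  have hy : ∀ n, ∑ j, AY n j * v j =
      c / d * ∑ j, AX n j * v j + (1 - c) / d * ∑ j ∈ univ.filter (fun j => j ≠ n), AX n j * v j := by
    intro n
    simp only [hAY, exp_sub_ite_div_sum_exp_sub_ite, ← hAX, hdiag]
    exact sum_mul_ite_div_mul _ _ _ _ _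
  rw [Finset.mul_sum]
  refine Finset.sum_le_sum fun k hk => ?_
  obtain ⟨hk1, hk2⟩ := Finset.mem_Icc.mp hk
  have hfun : (fun n => ((∑ j, AY n j * v j : ℝ) : ℂ)) =
      (c / d) • (fun n => ((∑ j, AX n j * v j : ℝ) : ℂ)) +
        ((1 - c) / d) • fun n => ((∑ j ∈ univ.filter (fun j => j ≠ n), AX n j * v j : ℝ) : ℂ) := by
    funext n
    simp only [hy, Pi.add_apply, Pi.smul_apply, Complex.real_smul]
    push_cast
    ring
  rw [hfun, dstft_smul_add_smul]
  calc _ ≤ (c / d + (1 - c) / d * κ) * ‖dstft (fun n => ((∑ j, AX n j * v j : ℝ) : ℂ)) ψ τ k‖ :=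
        norm_smul_add_smul_le (by positivity) (div_nonneg (by linarith) hd.le) (hsep τ k hk1 hk2)
    _ = _ := by
        congr 1
        field_simp
        linarith

theorem stmt15 (N : ℕ) [NeZero N] (hN : 2 ≤ N) (S : ZMod N → ZMod N → ℝ)
    (AX AY : ZMod N → ZMod N → ℝ) (v : ZMod N → ℝ) (ψ : ZMod N → ℝ)
    (a κ η α : ℝ) (kt : ℕ) (hkt1 : 1 ≤ kt) (hkt2 : kt ≤ N / 2)
    (hAX : ∀ i j, AX i j = Real.exp (S i j) / ∑ l : ZMod N, Real.exp (S i l))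
    (hAY : ∀ i j, AY i j = Real.exp (S i j - if i = j then α else 0) /
        ∑ l : ZMod N, Real.exp (S i l - if i = l then α else 0))
    (hhom : ∀ i m : ZMod N, AX i (i + m) = AX 0 m)
    (ha : IsLeast (Set.range fun i : ZMod N => AX i i) a)
    (hκ : 0 ≤ κ) (hκa : κ < 1 - a)
    (hsep : ∀ τ : ZMod N, ∀ k : ℕ, kt ≤ k → k ≤ N / 2 →
      ‖dstft
          (fun n => ((∑ j ∈ Finset.univ.filter (fun j => j ≠ n), AX n j * v j : ℝ) : ℂ))
          ψ τ (k : ZMod N)‖ ≤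
        κ * ‖dstft (fun n => ((∑ j : ZMod N, AX n j * v j : ℝ) : ℂ))
          ψ τ (k : ZMod N)‖)
    (hη1 : κ / (1 - a) < η) (hη2 : η < 1)
    (hα : α = Real.log ((1 - κ - a * η) / (η * (1 - a) - κ))) :
    ∀ τ : ZMod N,
      ∑ k ∈ Finset.Icc kt (N / 2),
          ‖dstft (fun n => ((∑ j : ZMod N, AY n j * v j : ℝ) : ℂ))
            ψ τ (k : ZMod N)‖ ≤
        η * ∑ k ∈ Finset.Icc kt (N / 2),
          ‖dstft (fun n => ((∑ j : ZMod N, AX n j * v j : ℝ) : ℂ))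
            ψ τ (k : ZMod N)‖ :=
  stmt15_general N S AX AY v ψ a κ η α kt hAX hAY hhom ha hκ hκa hsep hη1 hη2 hα
end

section
/- $\iota(\alpha,a) + \kappa\,\lambda(\alpha,a)$ is strictly decreasing in $\alpha$ on $[0,\infty)$ whenever $0 \leq \kappa < 1-a$ and $a \in [0,1)$, with value $1$ at $\alpha = 0$ and limit $\kappa/(1-a)$ as $\alpha \to \infty$; hence for every $\eta \in (\kappa/(1-a), 1]$ there is a unique $\alpha \geq 0$ with $\iota(\alpha,a)+\kappa\lambda(\alpha,a) = \eta$. -/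
/-!
Writing `t = e^{-α}`, the function `ι(α,a) + κ λ(α,a)` is the linear fractional map
`t ↦ (t + κ (1 - t)) / (1 - (1 - t) a)` composed with `α ↦ e^{-α}`, which maps `[0, ∞)`
decreasingly onto `(0, 1]`. The linear fractional map is increasing on `[0, 1]` because its
determinant is `1 - a - κ > 0`; it sends `1 ↦ 1` and `0 ↦ κ / (1 - a)`, and it can be inverted explicitly.
-/

open Filter Real Set

noncomputable def linFrac (a κ t : ℝ) : ℝ := (t + κ * (1 - t)) / (1 - (1 - t) * a)

lemma div_add_mul_div_eq_linFrac (a κ t : ℝ) :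
    t / (1 - (1 - t) * a) + κ * ((1 - t) / (1 - (1 - t) * a)) = linFrac a κ t := by
  rw [linFrac, mul_div_assoc', add_div]

section

variable {a κ : ℝ}

lemma linFrac_denom_pos (ha : a < 1) {t : ℝ} (ht : t ∈ Icc 0 1) : 0 < 1 - (1 - t) * a := by
  obtain ⟨ht0, ht1⟩ := ht
  -- `1 - (1 - t) a = (1 - t)(1 - a) + t`, a sum of nonnegative terms that do not both vanish
  nlinarith [mul_nonneg (sub_nonneg.2 ht1) (sub_pos.2 ha).le]

lemma linFrac_sub_linFrac {s t : ℝ} (hs : 1 - (1 - s) * a ≠ 0) (ht : 1 - (1 - t) * a ≠ 0) :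
    linFrac a κ s - linFrac a κ t =
      (s - t) * (1 - a - κ) / ((1 - (1 - s) * a) * (1 - (1 - t) * a)) := by
  rw [linFrac, linFrac, div_sub_div _ _ hs ht]
  ring_nf

lemma strictMonoOn_linFrac (ha : a < 1) (hκ : κ < 1 - a) :
    StrictMonoOn (linFrac a κ) (Icc 0 1) := by
  intro t ht s hs hts
  have hDs := linFrac_denom_pos ha hs
  have hDt := linFrac_denom_pos ha ht
  rw [← sub_pos, linFrac_sub_linFrac hDs.ne' hDt.ne']
  exact div_pos (mul_pos (sub_pos.2 hts) (by linarith)) (mul_pos hDs hDt)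

lemma linFrac_zero (a κ : ℝ) : linFrac a κ 0 = κ / (1 - a) := by
  simp [linFrac]

lemma continuousAt_linFrac_zero (ha : a ≠ 1) : ContinuousAt (linFrac a κ) 0 :=
  ContinuousAt.div (by fun_prop) (by fun_prop) (by simpa using sub_ne_zero.2 ha.symm)

lemma exists_linFrac_eq (ha : a < 1) {η : ℝ} (hη : κ / (1 - a) < η) (hη1 : η ≤ 1) :
    ∃ t ∈ Ioc 0 1, linFrac a κ t = η := by
  have hnum : 0 < η * (1 - a) - κ := by
    rw [div_lt_iff₀ (sub_pos.2 ha)] at hη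
    linarith
  -- `1 - κ - η a = (1 - η) + (η (1 - a) - κ)`
  have hden : 0 < 1 - κ - η * a := by linarith
  have ht : (η * (1 - a) - κ) / (1 - κ - η * a) ∈ Ioc 0 1 :=
    ⟨div_pos hnum hden, (div_le_one hden).2 (by linarith)⟩
  refine ⟨_, ht, ?_⟩
  rw [linFrac, div_eq_iff (linFrac_denom_pos ha (Ioc_subset_Icc_self ht)).ne']
  field_simp
  ring

end

lemma exp_neg_mem_Icc {α : ℝ} (hα : α ∈ Ici 0) : exp (-α) ∈ Icc 0 1 :=
  ⟨(exp_pos _).le, exp_le_one_iff.2 (neg_nonpos.2 hα)⟩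

theorem stmt18_general (a κ : ℝ) (ha1 : a < 1) (hκ : κ < 1 - a) :
    StrictAntiOn
        (fun α : ℝ => Real.exp (-α) / (1 - (1 - Real.exp (-α)) * a) +
          κ * ((1 - Real.exp (-α)) / (1 - (1 - Real.exp (-α)) * a)))
        (Set.Ici 0) ∧
      (Real.exp (-(0 : ℝ)) / (1 - (1 - Real.exp (-(0 : ℝ))) * a) +
          κ * ((1 - Real.exp (-(0 : ℝ))) / (1 - (1 - Real.exp (-(0 : ℝ))) * a)) = 1) ∧
      Filter.Tendsto
        (fun α : ℝ => Real.exp (-α) / (1 - (1 - Real.exp (-α)) * a) +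
          κ * ((1 - Real.exp (-α)) / (1 - (1 - Real.exp (-α)) * a)))
        Filter.atTop (nhds (κ / (1 - a))) ∧
      ∀ η : ℝ, κ / (1 - a) < η → η ≤ 1 →
        ∃! α : ℝ, 0 ≤ α ∧
          Real.exp (-α) / (1 - (1 - Real.exp (-α)) * a) +
            κ * ((1 - Real.exp (-α)) / (1 - (1 - Real.exp (-α)) * a)) = η := by
  simp only [div_add_mul_div_eq_linFrac]
  have hanti : StrictAntiOn (fun α => linFrac a κ (exp (-α))) (Ici 0) :=
    (strictMonoOn_linFrac ha1 hκ).comp_strictAntiOn (fun _ _ _ _ h => exp_lt_exp.2 (neg_lt_neg h))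
      fun _ => exp_neg_mem_Icc
  refine ⟨hanti, by norm_num [linFrac], ?_, fun η hη hη1 => ?_⟩
  · rw [← linFrac_zero]
    exact (continuousAt_linFrac_zero ha1.ne).tendsto.comp tendsto_exp_neg_atTop_nhds_zero
  · obtain ⟨t, ⟨ht0, ht1⟩, hηt⟩ := exists_linFrac_eq ha1 hη hη1
    have hα : 0 ≤ -log t := neg_nonneg.2 (log_nonpos ht0.le ht1)
    have hαη : linFrac a κ (exp (-(-log t))) = η := by rwa [neg_neg, exp_log ht0]
    exact ⟨-log t, ⟨hα, hαη⟩, fun β ⟨hβ, hβη⟩ => hanti.injOn hβ hα (hβη.trans hαη.symm)⟩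

theorem stmt18 (a κ : ℝ) (ha0 : 0 ≤ a) (ha1 : a < 1) (hκ0 : 0 ≤ κ) (hκ : κ < 1 - a) :
    StrictAntiOn
        (fun α : ℝ => Real.exp (-α) / (1 - (1 - Real.exp (-α)) * a) +
          κ * ((1 - Real.exp (-α)) / (1 - (1 - Real.exp (-α)) * a)))
        (Set.Ici 0) ∧
      (Real.exp (-(0 : ℝ)) / (1 - (1 - Real.exp (-(0 : ℝ))) * a) +
          κ * ((1 - Real.exp (-(0 : ℝ))) / (1 - (1 - Real.exp (-(0 : ℝ))) * a)) = 1) ∧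
      Filter.Tendsto
        (fun α : ℝ => Real.exp (-α) / (1 - (1 - Real.exp (-α)) * a) +
          κ * ((1 - Real.exp (-α)) / (1 - (1 - Real.exp (-α)) * a)))
        Filter.atTop (nhds (κ / (1 - a))) ∧
      ∀ η : ℝ, κ / (1 - a) < η → η ≤ 1 →
        ∃! α : ℝ, 0 ≤ α ∧
          Real.exp (-α) / (1 - (1 - Real.exp (-α)) * a) +
            κ * ((1 - Real.exp (-α)) / (1 - (1 - Real.exp (-α)) * a)) = η :=
  stmt18_general a κ ha1 hκ
end
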